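/- Let (G_j) be a sequence of finite graphs with e(G_j) → ∞ and ℓ(G_j) = O(√(e(G_j))) as j → ∞. Then there exists a subsequence (G_{j_k}) such that for every r > 0 the laws of the samplings S_{r/√(2e(G_{j_k}))}(G_{j_k}), viewed as probability measures on the countable set of isomorphism classes of finite graphs without isolated vertices, converge weakly as k → ∞; i.e., every such sequence has a subsequence that is sampling convergent. -/

import Mathlib

open Filter Finset
open scoped Classical ENNReal

/-- A finite graph on vertex set `Fin n`, possibly with loops, without multiple edges. -/
structure FinGraph where
  n : ℕ
  adj : Fin n → Fin n → Bool
  symm : ∀ i j, adj i j = adj j i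

namespace FinGraph

/-- Number of vertices. -/
def v (G : FinGraph) : ℕ := G.n

/-- Number of non-loop edges. -/
def e (G : FinGraph) : ℕ :=
  ((univ : Finset (Fin G.n × Fin G.n)).filter
    (fun q => G.adj q.1 q.2 = true ∧ q.1 < q.2)).card

/-- Number of loops. -/
def loops (G : FinGraph) : ℕ :=
  ((univ : Finset (Fin G.n)).filter (fun i => G.adj i i = true)).card

/-- Degree of a vertex (number of neighbours via non-loop edges). -/
def deg (G : FinGraph) (i : Fin G.n) : ℕ :=
  ((univ : Finset (Fin G.n)).filter (fun j => G.adj i j = true ∧ j ≠ i)).card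

/-- A graph is loopless when no vertex is adjacent to itself. -/
def Loopless (G : FinGraph) : Prop := ∀ i, G.adj i i = false

/-- The induced subgraph on a set `S` of vertices. -/
def induce (G : FinGraph) (S : Finset (Fin G.n)) : FinGraph where
  n := S.card
  adj i j := G.adj (S.orderIsoOfFin rfl i).1 (S.orderIsoOfFin rfl j).1
  symm i j := G.symm _ _

/-- The graph obtained by discarding all isolated vertices (vertices in no edge,
loop or non-loop). -/
def core (G : FinGraph) : FinGraph :=
  G.induce ((univ : Finset (Fin G.n)).filter (fun i => ∃ j, G.adj i j = true))

/-- Graph isomorphism. -/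
def Iso (G H : FinGraph) : Prop :=
  ∃ eqv : Fin G.n ≃ Fin H.n, ∀ i j, G.adj i j = H.adj (eqv i) (eqv j)

/-- Average degree `d̄(G)`. -/
noncomputable def avgDeg (G : FinGraph) : ℝ :=
  (1 / (G.n : ℝ)) * ∑ i : Fin G.n, (G.deg i : ℝ)

/-- Square average degree `d²̄(G)`. -/
noncomputable def sqAvgDeg (G : FinGraph) : ℝ :=
  (1 / (G.n : ℝ)) * ∑ i : Fin G.n, (G.deg i : ℝ) ^ 2

/-- Edge density `ρ(G) = 2e(G)/v(G)²`. -/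
noncomputable def density (G : FinGraph) : ℝ :=
  2 * (G.e : ℝ) / (G.n : ℝ) ^ 2

end FinGraph

/-- Unlabeled finite graphs: isomorphism classes of finite graphs. -/
def UGraph := Quot FinGraph.Iso

/-- The isomorphism class of a finite graph. -/
def FinGraph.cls (G : FinGraph) : UGraph := Quot.mk _ G

/-- Probability that independent Bernoulli(min p 1) vertex selection picks exactly `S`. -/
noncomputable def sampleWeight (G : FinGraph) (p : ℝ) (S : Finset (Fin G.n)) : ℝ :=
  (min p 1) ^ S.card * (1 - min p 1) ^ (G.n - S.card)

/-- Law (pmf) of the `p`-sampling `S_p(G)`: keep each vertex independently with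
probability `min p 1`, take the induced subgraph, discard isolated vertices,
and pass to the isomorphism class. -/
noncomputable def pSampleLaw (G : FinGraph) (p : ℝ) : UGraph → ℝ := fun H =>
  ∑ S ∈ (univ : Finset (Fin G.n)).powerset,
    sampleWeight G p S * (if ((G.induce S).core).cls = H then 1 else 0)

/-- The graph on `Fin k` pulled back along a vertex sample `x`. -/
def seqGraph (G : FinGraph) (k : ℕ) (x : Fin k → Fin G.n) : FinGraph where
  n := k
  adj i j := G.adj (x i) (x j)
  symm i j := G.symm _ _

/-- Law (pmf) of the with-replacement `p`-sampling `S̃_p(G)`: draw `K ~ Poisson(p·v(G))`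
vertices uniformly with replacement, form the graph on `Fin K` in which `i, j` are joined
whenever `(x_i, x_j)` is an edge of `G`, discard isolated vertices, and pass to the
isomorphism class. -/
noncomputable def wrSampleLaw (G : FinGraph) (p : ℝ) : UGraph → ℝ := fun H =>
  ∑' k : ℕ,
    (Real.exp (-(p * (G.v : ℝ))) * (p * (G.v : ℝ)) ^ k / (Nat.factorial k : ℝ)) *
      ((((univ : Finset (Fin k → Fin G.n)).filter
          (fun x => ((seqGraph G k x).core).cls = H)).card : ℝ) / ((G.v : ℝ)) ^ k)

/-- Total variation distance `sup_A |P(A) − Q(A)|` between two pmf-style laws on a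
countable discrete space. -/
noncomputable def dTV {α : Type*} (f g : α → ℝ) : ℝ :=
  ⨆ A : Set α, |∑' x : A, (f x.1 - g x.1)|

/-- `∑_i d_i · 1[d_i > k·√(e(G))]`, the total degree of vertices of degree exceeding
`k·√(e(G))`. -/
noncomputable def tailDegSum (G : FinGraph) (k : ℝ) : ℝ :=
  ∑ i : Fin G.n,
    (if k * Real.sqrt (G.e : ℝ) < (G.deg i : ℝ) then (G.deg i : ℝ) else 0)

/-- A sequence of graphs is uniformly sampling regular. -/
def UniformlySamplingRegular (G : ℕ → FinGraph) : Prop :=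
  ∀ ε : ℝ, 0 < ε → ∃ k : ℝ, 0 < k ∧ ∀ j,
    (1 / ((G j).e : ℝ)) * tailDegSum (G j) k < ε

/-- `E[e(S_p(G)) · 1[e(S_p(G)) > M]]`, the tail expectation of the number of non-loop
edges of the `p`-sampled subgraph (discarding isolated vertices does not change it). -/
noncomputable def expEdgeTail (G : FinGraph) (p M : ℝ) : ℝ :=
  ∑ S ∈ (univ : Finset (Fin G.n)).powerset,
    sampleWeight G p S *
      (if M < ((G.induce S).e : ℝ) then ((G.induce S).e : ℝ) else 0)

/-- `E[e(S_p(G))]`, the expected number of non-loop edges of the `p`-sampled subgraph. -/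
noncomputable def expEdge (G : FinGraph) (p : ℝ) : ℝ :=
  ∑ S ∈ (univ : Finset (Fin G.n)).powerset,
    sampleWeight G p S * ((G.induce S).e : ℝ)

/-- Law (pmf on ℕ) of the number of non-loop edges of the `p`-sampled subgraph. -/
noncomputable def edgeLaw (G : FinGraph) (p : ℝ) (m : ℕ) : ℝ :=
  ∑ S ∈ (univ : Finset (Fin G.n)).powerset,
    sampleWeight G p S * (if (G.induce S).e = m then 1 else 0)

/-- Number of kept neighbours (via non-loop edges) of vertex `i` under the selection `S`. -/
def keptNbrCount (G : FinGraph) (S : Finset (Fin G.n)) (i : Fin G.n) : ℕ :=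
  ((univ : Finset (Fin G.n)).filter (fun j => G.adj i j = true ∧ j ≠ i ∧ j ∈ S)).card

/-- `Pr(D_i ≥ 2)`: the probability that vertex `i` is kept and has at least two kept
neighbours, under independent Bernoulli(min p 1) vertex selection. -/
noncomputable def probD2 (G : FinGraph) (p : ℝ) (i : Fin G.n) : ℝ :=
  ∑ S ∈ (univ : Finset (Fin G.n)).powerset,
    sampleWeight G p S * (if i ∈ S ∧ 2 ≤ keptNbrCount G S i then 1 else 0)

/-- Probability that some kept vertex has at least two kept neighbours. -/
noncomputable def probSomeD2 (G : FinGraph) (p : ℝ) : ℝ :=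
  ∑ S ∈ (univ : Finset (Fin G.n)).powerset,
    sampleWeight G p S * (if ∃ i ∈ S, 2 ≤ keptNbrCount G S i then 1 else 0)

/-- Number of isolated kept (non-loop) edges: both endpoints kept, and each endpoint has
exactly one kept neighbour. -/
def isoEdgeCount (G : FinGraph) (S : Finset (Fin G.n)) : ℕ :=
  ((univ : Finset (Fin G.n × Fin G.n)).filter (fun q =>
    G.adj q.1 q.2 = true ∧ q.1 < q.2 ∧ q.1 ∈ S ∧ q.2 ∈ S ∧
    keptNbrCount G S q.1 = 1 ∧ keptNbrCount G S q.2 = 1)).card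

/-!
The laws of `S_p(G)` take values in `[0, 1]` and are indexed by the countable set `ℚ × UGraph`,
so a diagonal (Tychonoff) argument gives a subsequence along which they converge for every
rational `r`. Two uniform estimates extend this to every real `r` and make the limit a probability
distribution. Both rest on the fact that the class of `S_p(G)` only depends on the set of
non-isolated sampled vertices, whose expected size is at most `p ℓ(G) + 2 p² e(G) = O(r + r²)`
at `p = r / √(2 e(G))`.
* Equicontinuity in `r`: a `p₁`-sample is a `p₁/p₂`-thinning of a `p₂`-sample, and the thinning
  changes the class only if it removes a non-isolated vertex, so
  `|P_{p₁}(H) - P_{p₂}(H)| ≤ (p₂ - p₁)(ℓ(G) + 2 p₂ e(G))`.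
* Tightness: by Markov's inequality, `S_p(G)` has more than `N` vertices with probability
  `O((r + r²) / N)`.
-/

open Topology

section BernoulliSelection

variable {α : Type*}

noncomputable def bernoulliWeight (P : Finset α) (q : ℝ) (S : Finset α) : ℝ :=
  q ^ #S * (1 - q) ^ (#P - #S)

noncomputable def bernoulliExp (P : Finset α) (q : ℝ) (F : Finset α → ℝ) : ℝ :=
  ∑ S ∈ P.powerset, bernoulliWeight P q S * F S

variable {P A : Finset α} {q : ℝ}

theorem bernoulliWeight_nonneg (hq0 : 0 ≤ q) (hq1 : q ≤ 1) (S : Finset α) :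
    0 ≤ bernoulliWeight P q S :=
  mul_nonneg (pow_nonneg hq0 _) (pow_nonneg (sub_nonneg.mpr hq1) _)

theorem bernoulliExp_const (c : ℝ) : bernoulliExp P q (fun _ => c) = c := by
  simp only [bernoulliExp, bernoulliWeight, ← sum_mul, sum_pow_mul_eq_add_pow, add_sub_cancel,
    one_pow, one_mul]

theorem bernoulliExp_sub (F F' : Finset α → ℝ) :
    bernoulliExp P q (fun S => F S - F' S) = bernoulliExp P q F - bernoulliExp P q F' := by
  simp only [bernoulliExp, mul_sub, sum_sub_distrib]

theorem bernoulliExp_add (F F' : Finset α → ℝ) :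
    bernoulliExp P q (fun S => F S + F' S) = bernoulliExp P q F + bernoulliExp P q F' := by
  simp only [bernoulliExp, mul_add, sum_add_distrib]

theorem bernoulliExp_const_mul (c : ℝ) (F : Finset α → ℝ) :
    bernoulliExp P q (fun S => c * F S) = c * bernoulliExp P q F := by
  simp only [bernoulliExp, mul_sum, mul_left_comm]

theorem bernoulliExp_finsetSum {β : Type*} (T : Finset β) (F : β → Finset α → ℝ) :
    bernoulliExp P q (fun S => ∑ x ∈ T, F x S) = ∑ x ∈ T, bernoulliExp P q (F x) := by
  simp only [bernoulliExp, mul_sum]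
  exact sum_comm

theorem bernoulliExp_nonneg (hq0 : 0 ≤ q) (hq1 : q ≤ 1) {F : Finset α → ℝ} (hF : ∀ S, 0 ≤ F S) :
    0 ≤ bernoulliExp P q F :=
  sum_nonneg fun S _ => mul_nonneg (bernoulliWeight_nonneg hq0 hq1 S) (hF S)

theorem bernoulliExp_mono (hq0 : 0 ≤ q) (hq1 : q ≤ 1) {F F' : Finset α → ℝ}
    (h : ∀ S ⊆ P, F S ≤ F' S) : bernoulliExp P q F ≤ bernoulliExp P q F' :=
  sum_le_sum fun S hS =>
    mul_le_mul_of_nonneg_left (h S (mem_powerset.mp hS)) (bernoulliWeight_nonneg hq0 hq1 S)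

theorem abs_bernoulliExp_le (hq0 : 0 ≤ q) (hq1 : q ≤ 1) (F : Finset α → ℝ) :
    |bernoulliExp P q F| ≤ bernoulliExp P q (fun S => |F S|) := by
  refine (abs_sum_le_sum_abs _ _).trans_eq (sum_congr rfl fun S _ => ?_)
  rw [abs_mul, abs_of_nonneg (bernoulliWeight_nonneg hq0 hq1 S)]

variable [DecidableEq α]

theorem sum_Icc_pow_mul_pow_mul_pow {R : Type*} [CommSemiring R] (hAP : A ⊆ P) (a b c : R) :
    ∑ S ∈ Icc A P, a ^ #S * b ^ (#P - #S) * c ^ (#S - #A) =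
      a ^ #A * (a * c + b) ^ (#P - #A) := by
  have hdisj : ∀ {T}, T ∈ (P \ A).powerset → Disjoint A T := fun hT =>
    disjoint_sdiff.mono_right (mem_powerset.mp hT)
  have hinj : Set.InjOn (A ∪ ·) (P \ A).powerset := fun T hT T' hT' h => by
    simpa [union_sdiff_cancel_left (hdisj hT), union_sdiff_cancel_left (hdisj hT')] using
      congrArg (· \ A) h
  rw [Icc_eq_image_powerset hAP, sum_image hinj, ← card_sdiff_of_subset hAP,
    ← sum_pow_mul_eq_add_pow, mul_sum]
  refine sum_congr rfl fun T hT => ?_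
  have hTP : #T ≤ #(P \ A) := card_le_card (mem_powerset.mp hT)
  rw [card_union_of_disjoint (hdisj hT), card_sdiff_of_subset hAP] at *
  rw [Nat.add_sub_cancel_left, show #P - (#A + #T) = #P - #A - #T by omega, pow_add, mul_pow]
  ring

theorem bernoulliExp_indicator_subset (hAP : A ⊆ P) :
    bernoulliExp P q (fun S => if A ⊆ S then 1 else 0) = q ^ #A := by
  have h := sum_Icc_pow_mul_pow_mul_pow hAP q (1 - q) 1
  simp only [one_pow, mul_one, add_sub_cancel] at h
  rw [bernoulliExp, ← h, Icc_eq_filter_powerset, sum_filter]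
  simp [bernoulliWeight]

theorem bernoulliExp_card_filter_subset {β : Type*} (X : Finset β) {f : β → Finset α}
    (hf : ∀ x ∈ X, f x ⊆ P) :
    bernoulliExp P q (fun S => (#{x ∈ X | f x ⊆ S} : ℝ)) = ∑ x ∈ X, q ^ #(f x) := by
  simp only [natCast_card_filter, bernoulliExp_finsetSum]
  exact sum_congr rfl fun x hx => bernoulliExp_indicator_subset (hf x hx)

theorem bernoulliExp_card_sdiff {B : Finset α} (hBP : B ⊆ P) :
    bernoulliExp P q (fun S => (#(B \ S) : ℝ)) = (1 - q) * #B := by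
  have hind : ∀ v ∈ B, bernoulliExp P q (fun S => if v ∉ S then 1 else 0) = 1 - q := by
    intro v hv
    have h := bernoulliExp_indicator_subset (q := q) (singleton_subset_iff.mpr (hBP hv))
    rw [card_singleton, pow_one] at h
    have hcompl : (fun S => if v ∉ S then (1 : ℝ) else 0) =
        fun S => 1 - if ({v} : Finset α) ⊆ S then 1 else 0 := by
      funext S; by_cases hvS : v ∈ S <;> simp [hvS]
    rw [hcompl, bernoulliExp_sub, bernoulliExp_const, h]
  simp only [sdiff_eq_filter, natCast_card_filter, bernoulliExp_finsetSum]
  rw [sum_congr rfl hind, sum_const, nsmul_eq_mul, mul_comm]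

theorem bernoulliExp_bernoulliExp (u : ℝ) (F : Finset α → ℝ) :
    bernoulliExp P q (fun S' => bernoulliExp S' u F) = bernoulliExp P (q * u) F := by
  simp only [bernoulliExp, mul_sum]
  rw [sum_comm' (t' := P.powerset) (s' := fun S => Icc S P)]
  · refine sum_congr rfl fun S hS => ?_
    have h := sum_Icc_pow_mul_pow_mul_pow (mem_powerset.mp hS) q (1 - q) (1 - u)
    rw [show q * (1 - u) + (1 - q) = 1 - q * u by ring] at h
    simp only [bernoulliWeight]
    calc _ = (∑ S' ∈ Icc S P, q ^ #S' * (1 - q) ^ (#P - #S') * (1 - u) ^ (#S' - #S)) *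
          (u ^ #S * F S) := by
          rw [sum_mul]; exact sum_congr rfl fun _ _ => by ring
      _ = _ := by rw [h, mul_pow]; ring
  · intro S' S
    simp only [mem_powerset, mem_Icc]
    exact ⟨fun h => ⟨⟨h.2, h.1⟩, h.2.trans h.1⟩, fun h => ⟨h.1.2, h.1.1⟩⟩

/-- Couple the two selections by thinning: `F` can only change when the thinning removes an
element of `N S'`, which happens with probability at most `(1 - u) #(N S')`. -/
theorem abs_bernoulliExp_mul_sub_le {N : Finset α → Finset α} {F : Finset α → ℝ} {u : ℝ}
    (hq0 : 0 ≤ q) (hq1 : q ≤ 1) (hu0 : 0 ≤ u) (hu1 : u ≤ 1)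
    (hF : ∀ S S', |F S - F S'| ≤ 1) (hN : ∀ S', N S' ⊆ S')
    (hFN : ∀ S S', N S' ⊆ S → S ⊆ S' → F S = F S') :
    |bernoulliExp P (q * u) F - bernoulliExp P q F| ≤
      (1 - u) * bernoulliExp P q (fun S => (#(N S) : ℝ)) := by
  have hsplit : bernoulliExp P (q * u) F - bernoulliExp P q F =
      bernoulliExp P q (fun S' => bernoulliExp S' u (fun S => F S - F S')) := by
    rw [← bernoulliExp_bernoulliExp, ← bernoulliExp_sub]
    congr 1; funext S'
    rw [bernoulliExp_sub, bernoulliExp_const]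
  have hpt : ∀ S S', S ⊆ S' → |F S - F S'| ≤ #(N S' \ S) := by
    intro S S' hSS'
    rcases (N S' \ S).eq_empty_or_nonempty with h | h
    · rw [hFN S S' (sdiff_eq_empty_iff_subset.mp h) hSS', sub_self, abs_zero]
      positivity
    · exact (hF S S').trans (by exact_mod_cast h.card_pos)
  rw [hsplit]
  calc _ ≤ bernoulliExp P q (fun S' => |bernoulliExp S' u (fun S => F S - F S')|) :=
        abs_bernoulliExp_le hq0 hq1 _
    _ ≤ bernoulliExp P q (fun S' => bernoulliExp S' u (fun S => (#(N S' \ S) : ℝ))) :=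
        bernoulliExp_mono hq0 hq1 fun S' _ => (abs_bernoulliExp_le hu0 hu1 _).trans
          (bernoulliExp_mono hu0 hu1 fun S hS => hpt S S' hS)
    _ = (1 - u) * bernoulliExp P q (fun S => (#(N S) : ℝ)) := by
        simp only [bernoulliExp_card_sdiff (hN _), bernoulliExp_const_mul]

end BernoulliSelection

namespace FinGraph

instance : Countable FinGraph :=
  Function.Surjective.countable
    (f := fun x : Σ n, {a : Fin n → Fin n → Bool // ∀ i j, a i j = a j i} => ⟨x.1, x.2.1, x.2.2⟩)
    fun G => ⟨⟨G.n, G.adj, G.symm⟩, rfl⟩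

theorem finite_setOf_cls_of_n_le (N : ℕ) :
    {H : UGraph | ∃ F : FinGraph, F.n ≤ N ∧ F.cls = H}.Finite := by
  refine (Set.finite_range fun x : Σ n : Fin (N + 1),
    {a : Fin n → Fin n → Bool // ∀ i j, a i j = a j i} =>
      (⟨x.1, x.2.1, x.2.2⟩ : FinGraph).cls).subset ?_
  rintro _ ⟨F, hF, rfl⟩
  exact ⟨⟨⟨F.n, Nat.lt_succ_of_le hF⟩, F.adj, F.symm⟩, rfl⟩

theorem cls_eq_cls_induce {K G : FinGraph} {A : Finset (Fin G.n)} (f : Fin K.n → Fin G.n)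
    (hf : Function.Injective f) (hadj : ∀ i j, K.adj i j = G.adj (f i) (f j))
    (hrange : Set.range f = A) : K.cls = (G.induce A).cls := by
  let eqv : Fin K.n ≃ Fin (G.induce A).n := (Equiv.ofInjective f hf).trans
    ((Equiv.setCongr hrange).trans (A.orderIsoOfFin rfl).symm.toEquiv)
  have heqv : ∀ i, A.orderEmbOfFin rfl (eqv i) = f i := fun i => by
    show ((A.orderIsoOfFin rfl) ((A.orderIsoOfFin rfl).symm _) : Fin G.n) = f i
    rw [OrderIso.apply_symm_apply]
    rfl
  exact Quot.sound ⟨eqv, fun i j => by rw [hadj, ← heqv i, ← heqv j]; rfl⟩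

def inducedSupport (G : FinGraph) (S : Finset (Fin G.n)) : Finset (Fin G.n) :=
  {i ∈ S | ∃ j ∈ S, G.adj i j = true}

theorem inducedSupport_subset (G : FinGraph) (S : Finset (Fin G.n)) : G.inducedSupport S ⊆ S :=
  filter_subset _ _

theorem cls_core_induce (G : FinGraph) (S : Finset (Fin G.n)) :
    ((G.induce S).core).cls = (G.induce (G.inducedSupport S)).cls := by
  set T : Finset (Fin (G.induce S).n) := {i | ∃ j, (G.induce S).adj i j = true}
  let g : Fin (G.induce S).n ↪o Fin G.n := S.orderEmbOfFin rfl
  have hg : ∀ x ∈ S, ∃ a, g a = x := fun x hx =>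
    (Set.ext_iff.mp (range_orderEmbOfFin S (k := (G.induce S).n) rfl) x).mpr hx
  refine cls_eq_cls_induce (fun i => g (T.orderEmbOfFin rfl i))
    (g.injective.comp (T.orderEmbOfFin rfl).injective) (fun i j => rfl) ?_
  ext x
  simp only [Set.mem_range, mem_coe, inducedSupport, mem_filter]
  constructor
  · rintro ⟨i, rfl⟩
    obtain ⟨b, hb⟩ := (mem_filter.mp (T.orderEmbOfFin_mem rfl i)).2
    exact ⟨S.orderEmbOfFin_mem rfl _, g b, S.orderEmbOfFin_mem rfl b, hb⟩
  · rintro ⟨hx, y, hy, hxy⟩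
    obtain ⟨a, rfl⟩ := hg x hx
    obtain ⟨b, rfl⟩ := hg y hy
    have ha : a ∈ (T : Set (Fin (G.induce S).n)) := by simpa [T] using ⟨b, hxy⟩
    rw [← range_orderEmbOfFin T rfl] at ha
    obtain ⟨i, rfl⟩ := ha
    exact ⟨i, rfl⟩

theorem inducedSupport_eq_of_subset {G : FinGraph} {S S' : Finset (Fin G.n)}
    (hsupp : G.inducedSupport S' ⊆ S) (hSS' : S ⊆ S') :
    G.inducedSupport S = G.inducedSupport S' := by
  ext x
  simp only [inducedSupport, mem_filter]
  constructor
  · rintro ⟨hx, j, hj, hxj⟩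
    exact ⟨hSS' hx, j, hSS' hj, hxj⟩
  · rintro ⟨hx, j, hj, hxj⟩
    have hjx : G.adj j x = true := by rw [G.symm]; exact hxj
    exact ⟨hsupp (mem_filter.mpr ⟨hx, j, hj, hxj⟩), j,
      hsupp (mem_filter.mpr ⟨hj, x, hx, hjx⟩), hxj⟩

def loopFinset (G : FinGraph) : Finset (Fin G.n) := {i | G.adj i i = true}

def edgeFinset (G : FinGraph) : Finset (Fin G.n × Fin G.n) :=
  {q | G.adj q.1 q.2 = true ∧ q.1 < q.2}

theorem card_inducedSupport_le (G : FinGraph) (S : Finset (Fin G.n)) :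
    #(G.inducedSupport S) ≤
      #{i ∈ G.loopFinset | {i} ⊆ S} + 2 * #{q ∈ G.edgeFinset | {q.1, q.2} ⊆ S} := by
  set E := {q ∈ G.edgeFinset | {q.1, q.2} ⊆ S}
  have hsub : G.inducedSupport S ⊆
      {i ∈ G.loopFinset | {i} ⊆ S} ∪ (E.image Prod.fst ∪ E.image Prod.snd) := by
    intro i hi
    obtain ⟨hiS, j, hjS, hij⟩ := mem_filter.mp hi
    simp only [mem_union, mem_filter, mem_image, E, edgeFinset, loopFinset, mem_univ, true_and,
      singleton_subset_iff, insert_subset_iff, Prod.exists]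
    rcases lt_trichotomy i j with h | rfl | h
    · exact Or.inr (Or.inl ⟨i, j, ⟨⟨hij, h⟩, hiS, hjS⟩, rfl⟩)
    · exact Or.inl ⟨hij, hiS⟩
    · exact Or.inr (Or.inr ⟨j, i, ⟨⟨by rwa [G.symm], h⟩, hjS, hiS⟩, rfl⟩)
  calc #(G.inducedSupport S) ≤ _ := card_le_card hsub
    _ ≤ #{i ∈ G.loopFinset | {i} ⊆ S} + (#E + #E) := (card_union_le _ _).trans
          (add_le_add le_rfl ((card_union_le _ _).trans (add_le_add card_image_le card_image_le)))
    _ = _ := by ring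

theorem bernoulliExp_card_inducedSupport_le (G : FinGraph) {q : ℝ} (hq0 : 0 ≤ q) (hq1 : q ≤ 1) :
    bernoulliExp univ q (fun S => (#(G.inducedSupport S) : ℝ)) ≤
      q * G.loops + 2 * q ^ 2 * G.e := by
  calc _ ≤ bernoulliExp univ q (fun S => (#{i ∈ G.loopFinset | {i} ⊆ S} : ℝ) +
        2 * #{q ∈ G.edgeFinset | {q.1, q.2} ⊆ S}) :=
        bernoulliExp_mono hq0 hq1 fun S _ => by exact_mod_cast G.card_inducedSupport_le S
    _ = q * G.loops + 2 * q ^ 2 * G.e := by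
        rw [bernoulliExp_add, bernoulliExp_const_mul,
          bernoulliExp_card_filter_subset _ fun _ _ => subset_univ _,
          bernoulliExp_card_filter_subset _ fun _ _ => subset_univ _]
        have hedge : ∀ x ∈ G.edgeFinset, q ^ #{x.1, x.2} = q ^ 2 := fun x hx => by
          rw [card_pair (mem_filter.mp hx).2.2.ne]
        simp only [card_singleton, pow_one, sum_congr rfl hedge, sum_const, nsmul_eq_mul]
        rw [show #G.loopFinset = G.loops from rfl, show #G.edgeFinset = G.e from rfl]
        ring

theorem pSampleLaw_eq_bernoulliExp (G : FinGraph) (p : ℝ) (H : UGraph) :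
    pSampleLaw G p H =
      bernoulliExp univ (min p 1) (fun S => if ((G.induce S).core).cls = H then 1 else 0) := by
  simp [pSampleLaw, bernoulliExp, bernoulliWeight, sampleWeight]

theorem sum_pSampleLaw (G : FinGraph) (p : ℝ) (T : Finset UGraph) :
    ∑ H ∈ T, pSampleLaw G p H =
      bernoulliExp univ (min p 1) (fun S => if ((G.induce S).core).cls ∈ T then 1 else 0) := by
  simp only [pSampleLaw_eq_bernoulliExp, ← bernoulliExp_finsetSum, sum_ite_eq]

theorem pSampleLaw_nonneg (G : FinGraph) {p : ℝ} (hp : 0 ≤ p) (H : UGraph) :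
    0 ≤ pSampleLaw G p H := by
  rw [pSampleLaw_eq_bernoulliExp]
  exact bernoulliExp_nonneg (le_min hp zero_le_one) (min_le_right _ _) fun S => by
    split_ifs <;> norm_num

theorem sum_pSampleLaw_le_one (G : FinGraph) {p : ℝ} (hp : 0 ≤ p) (T : Finset UGraph) :
    ∑ H ∈ T, pSampleLaw G p H ≤ 1 := by
  rw [sum_pSampleLaw]
  refine (bernoulliExp_mono (le_min hp zero_le_one) (min_le_right _ _) fun S _ => ?_).trans_eq
    (bernoulliExp_const 1)
  split_ifs <;> norm_num

theorem pSampleLaw_le_one (G : FinGraph) {p : ℝ} (hp : 0 ≤ p) (H : UGraph) :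
    pSampleLaw G p H ≤ 1 := by
  simpa using G.sum_pSampleLaw_le_one hp {H}

theorem abs_pSampleLaw_sub_le (G : FinGraph) (H : UGraph) {p₁ p₂ : ℝ} (hp₁ : 0 ≤ p₁)
    (hp : p₁ ≤ p₂) :
    |pSampleLaw G p₁ H - pSampleLaw G p₂ H| ≤ (p₂ - p₁) * (G.loops + 2 * p₂ * G.e) := by
  rw [pSampleLaw_eq_bernoulliExp, pSampleLaw_eq_bernoulliExp]
  set q₁ := min p₁ 1
  set q₂ := min p₂ 1
  have hq₁ : 0 ≤ q₁ := le_min hp₁ zero_le_one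
  have hq : q₁ ≤ q₂ := min_le_min_right 1 hp
  have hq₂ : q₂ ≤ 1 := min_le_right _ _
  have hclip : q₂ - q₁ ≤ p₂ - p₁ := by
    have := abs_min_sub_min_le_max p₂ 1 p₁ 1
    rw [sub_self, abs_zero, abs_of_nonneg (sub_nonneg.mpr hp),
      max_eq_left (sub_nonneg.mpr hp)] at this
    exact (le_abs_self _).trans this
  set u := q₁ / q₂
  have hu0 : 0 ≤ u := div_nonneg hq₁ (hq₁.trans hq)
  have hu1 : u ≤ 1 := div_le_one_of_le₀ hq (hq₁.trans hq)
  have hqu : q₂ * u = q₁ := by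
    rcases eq_or_ne q₂ 0 with h | h
    · simp [u, h, le_antisymm (h ▸ hq) hq₁]
    · exact mul_div_cancel₀ q₁ h
  rw [← hqu]
  calc _ ≤ (1 - u) * bernoulliExp univ q₂ (fun S => (#(G.inducedSupport S) : ℝ)) := by
        refine abs_bernoulliExp_mul_sub_le (hq₁.trans hq) hq₂ hu0 hu1 (fun S S' => ?_)
          G.inducedSupport_subset (fun S S' hsupp hSS' => ?_)
        · split_ifs <;> norm_num
        · rw [cls_core_induce, cls_core_induce, inducedSupport_eq_of_subset hsupp hSS']
    _ ≤ (1 - u) * (q₂ * G.loops + 2 * q₂ ^ 2 * G.e) :=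
        mul_le_mul_of_nonneg_left (G.bernoulliExp_card_inducedSupport_le (hq₁.trans hq) hq₂)
          (sub_nonneg.mpr hu1)
    _ = (q₂ - q₁) * (G.loops + 2 * q₂ * G.e) := by rw [← hqu]; ring
    _ ≤ (p₂ - p₁) * (G.loops + 2 * p₂ * G.e) := by
        have hq₂' : 0 ≤ q₂ := hq₁.trans hq
        refine mul_le_mul hclip ?_ (by positivity) (sub_nonneg.mpr hp)
        gcongr
        exact min_le_left _ _

theorem one_sub_le_sum_pSampleLaw (G : FinGraph) {p : ℝ} (hp : 0 ≤ p) {N : ℕ} (hN : 0 < N) :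
    1 - (p * G.loops + 2 * p ^ 2 * G.e) / N ≤
      ∑ H ∈ (finite_setOf_cls_of_n_le N).toFinset, pSampleLaw G p H := by
  set q := min p 1
  have hq0 : 0 ≤ q := le_min hp zero_le_one
  have hN' : (0 : ℝ) < N := by exact_mod_cast hN
  have hmarkov : ∀ S, 1 - (1 / N : ℝ) * #(G.inducedSupport S) ≤
      if ((G.induce S).core).cls ∈ (finite_setOf_cls_of_n_le N).toFinset then 1 else 0 := by
    intro S
    rw [cls_core_induce]
    split_ifs with h
    · have : (0 : ℝ) ≤ 1 / N * #(G.inducedSupport S) := by positivity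
      linarith
    · have hlarge : N ≤ #(G.inducedSupport S) := by
        by_contra! hlt
        exact h ((Set.Finite.mem_toFinset _).mpr ⟨_, hlt.le, rfl⟩)
      rw [sub_nonpos, one_div_mul_eq_div, le_div_iff₀ hN', one_mul]
      exact_mod_cast hlarge
  calc 1 - (p * G.loops + 2 * p ^ 2 * G.e) / N ≤ 1 - 1 / N * (q * G.loops + 2 * q ^ 2 * G.e) := by
        rw [one_div_mul_eq_div]
        gcongr <;> exact min_le_left _ _
    _ ≤ 1 - 1 / N * bernoulliExp univ q (fun S => (#(G.inducedSupport S) : ℝ)) := by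
        gcongr
        exact G.bernoulliExp_card_inducedSupport_le hq0 (min_le_right _ _)
    _ = bernoulliExp univ q (fun S => 1 - (1 / N : ℝ) * #(G.inducedSupport S)) := by
        rw [bernoulliExp_sub, bernoulliExp_const, bernoulliExp_const_mul]
    _ ≤ _ := by
        rw [sum_pSampleLaw]
        exact bernoulliExp_mono hq0 (min_le_right _ _) fun S _ => hmarkov S

variable {G : FinGraph} {C : ℝ}

theorem loops_div_sqrt_le (hC : (G.loops : ℝ) ≤ C * √(G.e : ℝ)) (he : 0 < G.e) :
    (G.loops : ℝ) / √(2 * G.e) ≤ C := by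
  have he' : (0 : ℝ) < √(G.e : ℝ) := Real.sqrt_pos.mpr (by exact_mod_cast he)
  calc (G.loops : ℝ) / √(2 * G.e) ≤ G.loops / √(G.e : ℝ) :=
        div_le_div_of_nonneg_left (Nat.cast_nonneg _) he' (Real.sqrt_le_sqrt (by linarith))
    _ ≤ C := (div_le_iff₀ he').mpr hC

theorem sq_sqrt_two_mul_e : √(2 * (G.e : ℝ)) ^ 2 = 2 * G.e := Real.sq_sqrt (by positivity)

theorem abs_pSampleLaw_scaled_sub_le (H : UGraph) (hC : (G.loops : ℝ) ≤ C * √(G.e : ℝ))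
    (he : 0 < G.e) {a b : ℝ} (ha : 0 ≤ a) (hab : a ≤ b) :
    |pSampleLaw G (a / √(2 * G.e)) H - pSampleLaw G (b / √(2 * G.e)) H| ≤ (b - a) * (C + b) := by
  have hs : 0 < √(2 * (G.e : ℝ)) := Real.sqrt_pos.mpr (by positivity)
  calc _ ≤ (b / √(2 * G.e) - a / √(2 * G.e)) * (G.loops + 2 * (b / √(2 * G.e)) * G.e) :=
        G.abs_pSampleLaw_sub_le H (by positivity) (by gcongr)
    _ = (b - a) * (G.loops / √(2 * G.e) + b) := by
        field_simp
        linear_combination (-(b - a) * b) * sq_sqrt_two_mul_e (G := G)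
    _ ≤ (b - a) * (C + b) := by
        gcongr
        exact loops_div_sqrt_le hC he

theorem one_sub_le_sum_pSampleLaw_scaled (hC : (G.loops : ℝ) ≤ C * √(G.e : ℝ)) (he : 0 < G.e)
    {r : ℝ} (hr : 0 ≤ r) {N : ℕ} (hN : 0 < N) :
    1 - (r * C + r ^ 2) / N ≤
      ∑ H ∈ (finite_setOf_cls_of_n_le N).toFinset, pSampleLaw G (r / √(2 * G.e)) H := by
  have hs : 0 < √(2 * (G.e : ℝ)) := Real.sqrt_pos.mpr (by positivity)
  refine le_trans ?_ (G.one_sub_le_sum_pSampleLaw (by positivity) hN)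
  have hscale : r / √(2 * G.e) * G.loops + 2 * (r / √(2 * G.e)) ^ 2 * G.e =
      r * (G.loops / √(2 * G.e)) + r ^ 2 := by
    field_simp
    linear_combination (-r ^ 2) * sq_sqrt_two_mul_e (G := G)
  rw [hscale]
  gcongr
  exact loops_div_sqrt_le hC he

end FinGraph

instance : Countable UGraph := inferInstanceAs (Countable (Quot FinGraph.Iso))

theorem exists_strictMono_forall_tendsto {ι X : Type*} [Countable ι] [PseudoMetricSpace X]
    {K : Set X} (hK : IsCompact K) {x : ℕ → ι → X} (hx : ∀ n i, x n i ∈ K) :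
    ∃ φ : ℕ → ℕ, StrictMono φ ∧ ∀ i, ∃ l, Tendsto (fun k => x (φ k) i) atTop (𝓝 l) := by
  obtain ⟨L, -, φ, hφ, hL⟩ := (isCompact_univ_pi fun _ : ι => hK).tendsto_subseq (x := x)
    fun n => Set.mem_univ_pi.mpr (hx n)
  exact ⟨φ, hφ, fun i => ⟨L i, tendsto_pi_nhds.mp hL i⟩⟩

theorem exists_rat_gt_of_eventually {r : ℝ} {p : ℝ → Prop} (h : ∀ᶠ t in 𝓝 r, p t) :
    ∃ q : ℚ, r < q ∧ p q := by
  obtain ⟨δ, hδ, hball⟩ := Metric.eventually_nhds_iff.mp h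
  obtain ⟨q, hrq, hqδ⟩ := exists_rat_btwn (lt_add_of_pos_right r hδ)
  exact ⟨q, hrq, hball (by rw [Real.dist_eq, abs_of_pos (sub_pos.mpr hrq)]; linarith)⟩

theorem cauchySeq_of_forall_eventually_dist_le {X : Type*} [PseudoMetricSpace X] {f : ℕ → X}
    (h : ∀ ε > 0, ∃ g : ℕ → X, CauchySeq g ∧ ∀ᶠ k in atTop, dist (f k) (g k) ≤ ε) :
    CauchySeq f := by
  refine Metric.cauchySeq_iff.mpr fun ε hε => ?_
  obtain ⟨g, hg, hfg⟩ := h (ε / 4) (by positivity)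
  obtain ⟨N₁, hN₁⟩ := Metric.cauchySeq_iff.mp hg (ε / 4) (by positivity)
  obtain ⟨N₂, hN₂⟩ := eventually_atTop.mp hfg
  refine ⟨max N₁ N₂, fun m hm n hn => ?_⟩
  have h₁ := hN₂ m (le_of_max_le_right hm)
  have h₂ := hN₂ n (le_of_max_le_right hn)
  have h₃ := hN₁ m (le_of_max_le_left hm) n (le_of_max_le_left hn)
  calc dist (f m) (f n) ≤ dist (f m) (g m) + dist (g m) (g n) + dist (g n) (f n) :=
        dist_triangle4 _ _ _ _
    _ < ε := by rw [dist_comm (g n)]; linarith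

theorem tsum_eq_one_of_tendsto_of_tight {α : Type*} {P : ℕ → α → ℝ} {μ : α → ℝ}
    (hP0 : ∀ k a, 0 ≤ P k a) (hP1 : ∀ k (T : Finset α), ∑ a ∈ T, P k a ≤ 1)
    (hlim : ∀ a, Tendsto (fun k => P k a) atTop (𝓝 (μ a)))
    (htight : ∀ ε > 0, ∃ T : Finset α, ∀ᶠ k in atTop, 1 - ε ≤ ∑ a ∈ T, P k a) :
    ∑' a, μ a = 1 := by
  have hμ0 : ∀ a, 0 ≤ μ a := fun a => ge_of_tendsto' (hlim a) fun k => hP0 k a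
  have hsum : ∀ T : Finset α, Tendsto (fun k => ∑ a ∈ T, P k a) atTop (𝓝 (∑ a ∈ T, μ a)) :=
    fun T => tendsto_finsetSum T fun a _ => hlim a
  have hμ1 : ∀ T : Finset α, ∑ a ∈ T, μ a ≤ 1 := fun T => le_of_tendsto' (hsum T) (hP1 · T)
  refine le_antisymm (Real.tsum_le_of_sum_le hμ0 hμ1) (le_of_forall_sub_le fun ε hε => ?_)
  obtain ⟨T, hT⟩ := htight ε hε
  exact (ge_of_tendsto (hsum T) hT).trans
    ((summable_of_sum_le hμ0 hμ1).sum_le_tsum T fun a _ => hμ0 a)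

section SampledSequence

variable {G : ℕ → FinGraph} {C : ℝ}

theorem cauchySeq_pSampleLaw_scaled (hC : ∀ k, ((G k).loops : ℝ) ≤ C * √((G k).e : ℝ))
    (he : ∀ᶠ k in atTop, 0 < (G k).e) {r : ℝ} (hr : 0 < r) (H : UGraph)
    (hconv : ∀ q : ℚ, r < q → CauchySeq fun k => pSampleLaw (G k) (q / √(2 * (G k).e)) H) :
    CauchySeq fun k => pSampleLaw (G k) (r / √(2 * (G k).e)) H := by
  refine cauchySeq_of_forall_eventually_dist_le fun ε hε => ?_
  have hsmall : ∀ᶠ t in 𝓝 r, (t - r) * (C + t) < ε := by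
    have hcont : Tendsto (fun t => (t - r) * (C + t)) (𝓝 r) (𝓝 ((r - r) * (C + r))) :=
      ((continuous_id.sub continuous_const).mul (continuous_const.add continuous_id)).tendsto r
    rw [sub_self, zero_mul] at hcont
    exact hcont.eventually (gt_mem_nhds hε)
  obtain ⟨q, hrq, hq⟩ := exists_rat_gt_of_eventually hsmall
  refine ⟨_, hconv q hrq, he.mono fun k hk => ?_⟩
  rw [Real.dist_eq]
  exact ((G k).abs_pSampleLaw_scaled_sub_le H (hC k) hk hr.le hrq.le).trans hq.le

theorem exists_finset_one_sub_le_sum_pSampleLaw_scaled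
    (hC : ∀ k, ((G k).loops : ℝ) ≤ C * √((G k).e : ℝ)) (he : ∀ᶠ k in atTop, 0 < (G k).e)
    {r : ℝ} (hr : 0 ≤ r) {ε : ℝ} (hε : 0 < ε) :
    ∃ T : Finset UGraph, ∀ᶠ k in atTop,
      1 - ε ≤ ∑ H ∈ T, pSampleLaw (G k) (r / √(2 * (G k).e)) H := by
  obtain ⟨n, hn⟩ := exists_nat_gt ((r * C + r ^ 2) / ε)
  refine ⟨(FinGraph.finite_setOf_cls_of_n_le (n + 1)).toFinset, he.mono fun k hk => ?_⟩
  refine le_trans ?_ (FinGraph.one_sub_le_sum_pSampleLaw_scaled (hC k) hk hr n.succ_pos)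
  rw [div_lt_iff₀ hε] at hn
  rw [Nat.cast_succ, sub_le_sub_iff_left, div_le_iff₀ (by positivity)]
  linarith

end SampledSequence

/-- Every sequence of finite graphs with `e(G_j) → ∞` and
`ℓ(G_j) = O(√(e(G_j)))` has a subsequence that is sampling convergent: along the
subsequence, for every `r > 0` the laws of `S_{r/√(2e)}(G_j)`, viewed as probability
measures on the countable discrete set of unlabeled graphs, converge weakly (equivalently,
pointwise to a pmf `μ`). -/
theorem stmt14 (G : ℕ → FinGraph)
    (he : Tendsto (fun j => ((G j).e : ℝ)) atTop atTop)
    (hl : ∃ C : ℝ, ∀ j, ((G j).loops : ℝ) ≤ C * Real.sqrt ((G j).e : ℝ)) :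
    ∃ φ : ℕ → ℕ, StrictMono φ ∧
      ∀ r : ℝ, 0 < r → ∃ μ : UGraph → ℝ,
        (∀ H, 0 ≤ μ H) ∧ (∑' H : UGraph, μ H) = 1 ∧
        ∀ H, Tendsto
          (fun k => pSampleLaw (G (φ k)) (r / Real.sqrt (2 * ((G (φ k)).e : ℝ))) H)
          atTop (nhds (μ H)) := by
  obtain ⟨C, hC⟩ := hl
  obtain ⟨φ, hφ, hconv⟩ := exists_strictMono_forall_tendsto isCompact_Icc
    (x := fun j (i : ℚ × UGraph) => pSampleLaw (G j) (|(i.1 : ℝ)| / √(2 * (G j).e)) i.2)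
    fun j i => ⟨(G j).pSampleLaw_nonneg (by positivity) _,
      (G j).pSampleLaw_le_one (by positivity) _⟩
  refine ⟨φ, hφ, fun r hr => ?_⟩
  have hpos : ∀ᶠ k in atTop, 0 < (G (φ k)).e :=
    ((he.comp hφ.tendsto_atTop).eventually_gt_atTop 0).mono fun k hk => Nat.cast_pos.mp hk
  have hcauchy := fun H => cauchySeq_pSampleLaw_scaled (fun k => hC (φ k)) hpos hr H
    fun q hq => by
      obtain ⟨_, hlim⟩ := hconv (q, H)
      simpa [abs_of_pos (hr.trans hq)] using hlim.cauchySeq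
  choose μ hμ using fun H => cauchySeq_tendsto_of_complete (hcauchy H)
  have hlaw0 : ∀ k H, 0 ≤ pSampleLaw (G (φ k)) (r / √(2 * (G (φ k)).e)) H :=
    fun k => (G (φ k)).pSampleLaw_nonneg (by positivity)
  have htight := fun ε (hε : 0 < ε) =>
    exists_finset_one_sub_le_sum_pSampleLaw_scaled (fun k => hC (φ k)) hpos hr.le hε
  exact ⟨μ, fun H => ge_of_tendsto' (hμ H) (hlaw0 · H), tsum_eq_one_of_tendsto_of_tight hlaw0
    (fun k => (G (φ k)).sum_pSampleLaw_le_one (by positivity)) hμ htight, hμ⟩
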